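/- (a) If c < 0, then √(1 + t²) < f_c(t) < √(1 + (t + τ)²) for all t > 0, where τ = √((1 − c)^{2/n} − 1); the same inequalities hold for c = 1 with τ = √(2^{2/n} − 1). (b) If 0 < c < 1, then f_c(t) < √(1 + t²) < f_c(t + τ_c) for all t > 0, where τ_c is the unique positive number satisfying f_c(τ_c) = 1. -/

import Mathlib

open Real Filter

/-- A global spacelike solution: a `C²` function `f : ℝ → ℝ` with `|f'| < 1` and
`f'' = f^(n-1) (1 - f'^2)^((n+2)/2)` on all of `ℝ`. -/
def IsGSS (n : ℕ) (f : ℝ → ℝ) : Prop :=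
  ContDiff ℝ 2 f ∧
  ∀ t : ℝ, |deriv f t| < 1 ∧
    deriv (deriv f) t = f t ^ (n - 1) * (1 - (deriv f t) ^ 2) ^ ((n + 2 : ℝ) / 2)

/-- `IsFc n c f` says that `f` is the normalized global spacelike solution `f_c`:
for `c < 1` it satisfies `f 0 = (1-c)^(1/n)`, `f' 0 = 0` (so its first integral is `c`);
for `c = 1` it satisfies `f 0 = 1`, `f' 0 = √(1 - 2^(-2/n))` (first integral `1`,
and `f` is strictly increasing). -/
def IsFc (n : ℕ) (c : ℝ) (f : ℝ → ℝ) : Prop :=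
  IsGSS n f ∧
  (c < 1 → f 0 = (1 - c) ^ ((1 : ℝ) / n) ∧ deriv f 0 = 0) ∧
  (c = 1 → f 0 = 1 ∧ deriv f 0 = Real.sqrt (1 - (2 : ℝ) ^ (-(2 : ℝ) / n)))

section Stmt11Aux

private lemma grow_aux {w : ℝ → ℝ} {a : ℝ} (hw : Continuous w)
    (hd : ∀ s, a < s → ∃ d, 1 < d ∧ HasDerivAt w d s) :
    ∀ t, a < t → w a + (t - a) < w t := by
  have step : ∀ s t : ℝ, a < s → s < t → t - s < w t - w s := by
    intro s t has hst
    have hmono : StrictMonoOn (fun x => w x - x) (Set.Icc s t) := by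
      apply strictMonoOn_of_deriv_pos (convex_Icc s t)
      · exact (hw.sub continuous_id).continuousOn
      · intro x hx
        rw [interior_Icc] at hx
        obtain ⟨d, hd1, hdd⟩ := hd x (has.trans hx.1)
        rw [show (fun x => w x - x) = (w - fun x => x) from rfl,
          (hdd.sub (hasDerivAt_id' (𝕜 := ℝ) x)).deriv]
        linarith
    have := hmono ⟨le_rfl, hst.le⟩ ⟨hst.le, le_rfl⟩ hst
    simp only at this
    linarith
  have hge : ∀ t, a < t → w a + (t - a) ≤ w t := by
    intro t hat
    have hlim : Tendsto (fun s => w t - w s - (t - s)) (nhdsWithin a (Set.Ioi a))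
        (nhds (w t - w a - (t - a))) := by
      apply Tendsto.mono_left _ nhdsWithin_le_nhds
      exact (tendsto_const_nhds.sub (hw.tendsto a)).sub
        (tendsto_const_nhds.sub tendsto_id)
    have hev : ∀ᶠ s in nhdsWithin a (Set.Ioi a), (0:ℝ) ≤ w t - w s - (t - s) := by
      filter_upwards [Ioo_mem_nhdsGT_of_mem ⟨le_rfl, hat⟩] with s hs
      have := step s t hs.1 hs.2; linarith
    have := ge_of_tendsto hlim hev
    linarith
  intro t hat
  have ham : a < (a + t) / 2 := by linarith
  have hmt : (a + t) / 2 < t := by linarith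
  have h1 := step ((a + t) / 2) t ham hmt
  have h2 := hge ((a + t) / 2) ham
  linarith

private lemma slow_aux {w : ℝ → ℝ} {a : ℝ} (hw : Continuous w)
    (hd : ∀ s, a < s → ∃ d, d < 1 ∧ HasDerivAt w d s) :
    ∀ t, a < t → w t < w a + (t - a) := by
  intro t hat
  have := grow_aux (w := fun s => 2 * s - w s) (a := a)
    ((continuous_const.mul continuous_id).sub hw)
    (fun s has => by
      obtain ⟨d, hd1, hdd⟩ := hd s has
      exact ⟨2 - d, by linarith,
        (((hasDerivAt_id' (𝕜 := ℝ) s).const_mul 2).sub hdd).congr_deriv (by ring)⟩) t hat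
  linarith

variable {n : ℕ} {f : ℝ → ℝ}

private lemma upos (h : IsGSS n f) (t : ℝ) : 0 < 1 - deriv f t ^ 2 := by
  have := (h.2 t).1
  rw [abs_lt] at this
  nlinarith [this.1, this.2]

private lemma ule (t : ℝ) : 1 - deriv f t ^ 2 ≤ 1 := by nlinarith [sq_nonneg (deriv f t)]

private lemma diff1 (h : IsGSS n f) : Differentiable ℝ f := h.1.differentiable two_ne_zero

private lemma diff2 (h : IsGSS n f) : Differentiable ℝ (deriv f) := by
  have h2 : ContDiff ℝ (1 + 1 : ℕ) f := by norm_num [h.1]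
  rw [show ((1 + 1 : ℕ) : WithTop ℕ∞) = (1 : WithTop ℕ∞) + 1 by norm_num] at h2
  exact (contDiff_succ_iff_deriv.mp h2).2.2.differentiable one_ne_zero

private lemma hfd (h : IsGSS n f) (t : ℝ) : HasDerivAt f (deriv f t) t :=
  (diff1 h t).hasDerivAt

private lemma hf'd (h : IsGSS n f) (t : ℝ) : HasDerivAt (deriv f) (deriv (deriv f) t) t :=
  (diff2 h t).hasDerivAt

private lemma hud (h : IsGSS n f) (t : ℝ) :
    HasDerivAt (fun s => 1 - deriv f s ^ 2) (0 - 2 * deriv f t ^ 1 * deriv (deriv f) t) t :=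
  (hasDerivAt_const t 1).sub ((hf'd h t).pow 2)

/-- First integral: `(1-f'²)^(-n/2) - fⁿ` is constant. -/
private lemma first_integral (h : IsGSS n f) (t : ℝ) :
    (1 - deriv f t ^ 2) ^ (-(n : ℝ) / 2) - f t ^ n
      = (1 - deriv f 0 ^ 2) ^ (-(n : ℝ) / 2) - f 0 ^ n := by
  have hE : ∀ s : ℝ, HasDerivAt
      (fun x => (1 - deriv f x ^ 2) ^ (-(n : ℝ) / 2) - f x ^ n) 0 s := by
    intro s
    have hu := upos h s
    have hGd := (hud h s).rpow_const (p := -(n : ℝ) / 2) (Or.inl hu.ne')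
    have hfn := (hfd h s).pow n
    have key : (1 - deriv f s ^ 2) ^ (-(n : ℝ) / 2 - 1)
        * (1 - deriv f s ^ 2) ^ (((n : ℝ) + 2) / 2) = 1 := by
      rw [← Real.rpow_add hu, show -(n : ℝ) / 2 - 1 + ((n : ℝ) + 2) / 2 = 0 by ring,
        Real.rpow_zero]
    have hode := (h.2 s).2
    refine (hGd.sub hfn).congr_deriv ?_
    rw [hode]
    linear_combination ((n : ℝ) * deriv f s * f s ^ (n - 1)) * key
  exact is_const_of_deriv_eq_zero (f := fun x =>
      (1 - deriv f x ^ 2) ^ (-(n : ℝ) / 2) - f x ^ n)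
    (fun s => (hE s).differentiableAt) (fun s => (hE s).deriv) t 0

/-- Derivative of `W = f' · (1-f'²)^(-1/2)`. -/
private lemma hasDeriv_W (h : IsGSS n f) (t : ℝ) :
    HasDerivAt (fun s => deriv f s * (1 - deriv f s ^ 2) ^ (-(1 : ℝ) / 2))
      (f t ^ (n - 1) * (1 - deriv f t ^ 2) ^ (((n : ℝ) - 1) / 2)) t := by
  have hu := upos h t
  have hFd := (hud h t).rpow_const (p := -(1 : ℝ) / 2) (Or.inl hu.ne')
  have hWd := (hf'd h t).mul hFd
  refine hWd.congr_deriv ?_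
  rw [(h.2 t).2]
  have k1 : (1 - deriv f t ^ 2) ^ (((n : ℝ) + 2) / 2) * (1 - deriv f t ^ 2) ^ (-(1 : ℝ) / 2)
      = (1 - deriv f t ^ 2) ^ (((n : ℝ) - 1) / 2) * (1 - deriv f t ^ 2) := by
    rw [← Real.rpow_add hu, ← Real.rpow_add_one hu.ne' (((n : ℝ) - 1) / 2)]
    congr 1; ring
  have k2 : (1 - deriv f t ^ 2) ^ (((n : ℝ) + 2) / 2) * (1 - deriv f t ^ 2) ^ (-(1 : ℝ) / 2 - 1)
      = (1 - deriv f t ^ 2) ^ (((n : ℝ) - 1) / 2) := by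
    rw [← Real.rpow_add hu]; congr 1; ring
  linear_combination (f t ^ (n - 1)) * k1 + (f t ^ (n - 1) * deriv f t ^ 2) * k2

/-- `W' = b^(n-1)` where `b = f·u^(1/2)`. -/
private lemma Wval_eq (hn : 2 ≤ n) {u x : ℝ} (hu : 0 < u) :
    x ^ (n - 1) * u ^ (((n : ℝ) - 1) / 2) = (x * u ^ ((1 : ℝ) / 2)) ^ (n - 1) := by
  rw [mul_pow, ← Real.rpow_natCast (u ^ ((1 : ℝ) / 2)) (n - 1), ← Real.rpow_mul hu.le]
  congr 2
  rw [Nat.cast_sub (by omega : 1 ≤ n)]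
  push_cast; ring

private lemma Fpow_eq (hn : 2 ≤ n) {u : ℝ} (hu : 0 < u) :
    (u ^ (-(1 : ℝ) / 2)) ^ n = u ^ (-(n : ℝ) / 2) := by
  rw [← Real.rpow_natCast (u ^ (-(1 : ℝ) / 2)) n, ← Real.rpow_mul hu.le]
  congr 1; ring

private lemma Fmul_eq {u : ℝ} (hu : 0 < u) : u ^ (-(1 : ℝ) / 2) * u ^ ((1 : ℝ) / 2) = 1 := by
  rw [← Real.rpow_add hu]; norm_num

private lemma sq_half {u : ℝ} (hu : 0 < u) : (u ^ ((1 : ℝ) / 2)) ^ (2 : ℕ) = u := by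
  rw [← Real.rpow_natCast (u ^ ((1 : ℝ) / 2)) 2, ← Real.rpow_mul hu.le]
  norm_num

private lemma sq_neghalf {u : ℝ} (hu : 0 < u) :
    (u ^ (-(1 : ℝ) / 2)) ^ (2 : ℕ) * u = 1 := by
  rw [← Real.rpow_natCast (u ^ (-(1 : ℝ) / 2)) 2, ← Real.rpow_mul hu.le]
  norm_num [Real.rpow_neg_one]
  field_simp

private lemma G_ge_one (h : IsGSS n f) (t : ℝ) :
    1 ≤ (1 - deriv f t ^ 2) ^ (-(n : ℝ) / 2) := by
  apply Real.one_le_rpow_of_pos_of_le_one_of_nonpos (upos h t) (ule t)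
  have : (0 : ℝ) ≤ (n : ℝ) / 2 := by positivity
  linarith

end Stmt11Aux

set_option maxHeartbeats 1000000 in
/-- comparison of `f_c` with the hyperboloid `f_0 (t) = √(1+t²)`. -/
theorem stmt_11 (n : ℕ) (hn : 2 ≤ n) (c : ℝ) (hc : c ≤ 1) (f : ℝ → ℝ)
    (hf : IsFc n c f) :
    (c < 0 → ∀ t : ℝ, 0 < t →
      Real.sqrt (1 + t ^ 2) < f t ∧
      f t < Real.sqrt (1 + (t + Real.sqrt ((1 - c) ^ ((2 : ℝ) / n) - 1)) ^ 2)) ∧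
    (c = 1 → ∀ t : ℝ, 0 < t →
      Real.sqrt (1 + t ^ 2) < f t ∧
      f t < Real.sqrt (1 + (t + Real.sqrt ((2 : ℝ) ^ ((2 : ℝ) / n) - 1)) ^ 2)) ∧
    (0 < c → c < 1 →
      (∃! τ : ℝ, 0 < τ ∧ f τ = 1) ∧
      ∀ τ : ℝ, 0 < τ → f τ = 1 → ∀ t : ℝ, 0 < t →
        f t < Real.sqrt (1 + t ^ 2) ∧ Real.sqrt (1 + t ^ 2) < f (t + τ)) := by
  obtain ⟨hgss, hic, hic1⟩ := hf
  have hn0 : (0 : ℝ) < n := by exact_mod_cast (by omega : 0 < n)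
  have hupos : ∀ s, 0 < 1 - deriv f s ^ 2 := upos hgss
  have hcont : Continuous f := hgss.1.continuous
  have hucont : Continuous (fun s => 1 - deriv f s ^ 2) :=
    continuous_const.sub ((diff2 hgss).continuous.pow 2)
  refine ⟨?_, ?_, ?_⟩
  · -- branch c < 0
    intro hcneg
    have hc1 : c < 1 := by linarith
    obtain ⟨hf0, hf'0⟩ := hic hc1
    have h1c : (0 : ℝ) < 1 - c := by linarith
    have hHn : ∀ s, (1 - deriv f s ^ 2) ^ (-(n : ℝ) / 2) = f s ^ n + c := by
      intro s
      have hf0n : f 0 ^ n = 1 - c := by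
        rw [hf0, ← Real.rpow_natCast ((1 - c) ^ ((1 : ℝ) / n)) n, ← Real.rpow_mul h1c.le,
          show (1 : ℝ) / n * n = 1 by field_simp, Real.rpow_one]
      have h0 : (1 - deriv f 0 ^ 2) ^ (-(n : ℝ) / 2) - f 0 ^ n = c := by
        rw [hf'0, hf0n]
        norm_num
      have := first_integral hgss s
      rw [h0] at this
      linarith
    have hfn_lb : ∀ s, 1 - c ≤ f s ^ n := by
      intro s
      have h1 := hHn s
      have h2 := G_ge_one hgss s
      linarith
    have hfpos : ∀ s, 0 < f s := by
      intro s
      by_contra hle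
      push_neg at hle
      have hf0pos : 0 < f 0 := by rw [hf0]; exact Real.rpow_pos_of_pos h1c _
      obtain ⟨x, _, hfx⟩ := intermediate_value_uIcc (a := s) (b := 0)
        hcont.continuousOn (Set.mem_uIcc.mpr (Or.inl ⟨hle, hf0pos.le⟩))
      have := hfn_lb x
      rw [hfx, zero_pow (by omega : n ≠ 0)] at this
      linarith
    have hfgt1 : ∀ s, 1 < f s := by
      intro s
      have hlb : (1 - c) ^ ((1 : ℝ) / n) ≤ f s := by
        have h2 := Real.rpow_le_rpow h1c.le (hfn_lb s)
          (le_of_lt (div_pos one_pos hn0))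
        rwa [← Real.rpow_natCast (f s) n, ← Real.rpow_mul (hfpos s).le,
          show (n : ℝ) * ((1 : ℝ) / n) = 1 by field_simp, Real.rpow_one] at h2
      have h3 : (1 : ℝ) < (1 - c) ^ ((1 : ℝ) / n) := by
        calc (1 : ℝ) = 1 ^ ((1 : ℝ) / n) := (Real.one_rpow _).symm
        _ < (1 - c) ^ ((1 : ℝ) / n) :=
          Real.rpow_lt_rpow (by norm_num) (by linarith) (div_pos one_pos hn0)
      linarith
    have hFlt : ∀ s, (1 - deriv f s ^ 2) ^ (-(1 : ℝ) / 2) < f s := by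
      intro s
      apply (pow_lt_pow_iff_left₀ (Real.rpow_nonneg (hupos s).le _) (hfpos s).le
        (by omega : n ≠ 0)).mp
      rw [Fpow_eq hn (hupos s), hHn s]
      linarith
    have hb : ∀ s, 1 < f s * (1 - deriv f s ^ 2) ^ ((1 : ℝ) / 2) := by
      intro s
      have h1 := Fmul_eq (hupos s)
      have h2 : 0 < (1 - deriv f s ^ 2) ^ ((1 : ℝ) / 2) :=
        Real.rpow_pos_of_pos (hupos s) _
      nlinarith [hFlt s]
    have hf''pos : ∀ x, 0 < deriv (deriv f) x := by
      intro x
      rw [(hgss.2 x).2]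
      exact mul_pos (pow_pos (hfpos x) _) (Real.rpow_pos_of_pos (hupos x) _)
    have hf'pos : ∀ s, 0 < s → 0 < deriv f s := by
      intro s hs
      have := strictMono_of_deriv_pos hf''pos hs
      rwa [hf'0] at this
    intro t ht
    constructor
    · -- lower bound via W
      have hWcont : Continuous (fun s => deriv f s * (1 - deriv f s ^ 2) ^ (-(1 : ℝ) / 2)) :=
        (diff2 hgss).continuous.mul
          (hucont.rpow_const (fun x => Or.inl (hupos x).ne'))
      have hWgt := grow_aux hWcont (a := 0) (fun x _ => by
        refine ⟨_, ?_, hasDeriv_W hgss x⟩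
        rw [Wval_eq hn (hupos x)]
        exact one_lt_pow₀ (hb x) (by omega)) t ht
      rw [hf'0] at hWgt
      simp only [zero_mul, zero_add, sub_zero] at hWgt
      -- now t < W t
      have e1 := sq_neghalf (hupos t)
      set F := (1 - deriv f t ^ 2) ^ (-(1 : ℝ) / 2) with hF
      have hFpos : 0 < F := Real.rpow_pos_of_pos (hupos t) _
      have hW2 : (deriv f t * F) ^ 2 = F ^ 2 - 1 := by linear_combination -e1
      rw [Real.sqrt_lt' (hfpos t)]
      nlinarith [hFlt t, hWgt, ht, hfpos t]
    · -- upper bound via w = sqrt(f²-1)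
      have hwcont : Continuous (fun s => Real.sqrt (f s ^ 2 - 1)) :=
        ((hcont.pow 2).sub continuous_const).sqrt
      have hwlt := slow_aux hwcont (a := 0) (fun s hs => by
        have hgpos : 0 < f s ^ 2 - 1 := by nlinarith [hfgt1 s]
        refine ⟨_, ?_, (((hfd hgss s).pow 2).sub_const 1).sqrt hgpos.ne'⟩
        rw [div_lt_one (by positivity)]
        have hff' : 0 ≤ f s * deriv f s :=
          mul_nonneg (hfpos s).le (hf'pos s hs).le
        have hb2 : f s ^ 2 * (1 - deriv f s ^ 2)
            = (f s * (1 - deriv f s ^ 2) ^ ((1 : ℝ) / 2)) ^ 2 := by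
          rw [mul_pow, sq_half (hupos s)]
        have hlt2 : f s * deriv f s < Real.sqrt (f s ^ 2 - 1) :=
          (Real.lt_sqrt hff').mpr (by nlinarith [hb s, hb2])
        norm_num
        linarith [hlt2]) t ht
      have hw0 : Real.sqrt (f 0 ^ 2 - 1) = Real.sqrt ((1 - c) ^ ((2 : ℝ) / n) - 1) := by
        congr 1
        rw [hf0, ← Real.rpow_natCast ((1 - c) ^ ((1 : ℝ) / n)) 2, ← Real.rpow_mul h1c.le]
        congr 2
        ring
      rw [hw0] at hwlt
      set τ := Real.sqrt ((1 - c) ^ ((2 : ℝ) / n) - 1) with hτ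
      have hτ0 : 0 ≤ τ := Real.sqrt_nonneg _
      have hpos2 : 0 < τ + (t - 0) := by linarith
      have h2 : f t ^ 2 - 1 < (τ + (t - 0)) ^ 2 := (Real.sqrt_lt' hpos2).mp hwlt
      rw [Real.lt_sqrt (hfpos t).le]
      nlinarith [h2]
  · -- branch c = 1
    intro hceq
    subst hceq
    obtain ⟨hf0, hf'0⟩ := hic1 rfl
    have ha1 : (2 : ℝ) ^ (-(2 : ℝ) / n) < 1 :=
      Real.rpow_lt_one_of_one_lt_of_neg one_lt_two
        (div_neg_of_neg_of_pos (by norm_num) hn0)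
    have ha0 : (0 : ℝ) < (2 : ℝ) ^ (-(2 : ℝ) / n) := Real.rpow_pos_of_pos two_pos _
    have hu0 : 1 - deriv f 0 ^ 2 = (2 : ℝ) ^ (-(2 : ℝ) / n) := by
      rw [hf'0, Real.sq_sqrt (by linarith)]; ring
    have hHn : ∀ s, (1 - deriv f s ^ 2) ^ (-(n : ℝ) / 2) = f s ^ n + 1 := by
      intro s
      have h0 : (1 - deriv f 0 ^ 2) ^ (-(n : ℝ) / 2) - f 0 ^ n = 1 := by
        rw [hu0, hf0, ← Real.rpow_mul (by norm_num : (0 : ℝ) ≤ 2),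
          show (-(2 : ℝ) / n) * (-(n : ℝ) / 2) = 1 by field_simp, Real.rpow_one]
        norm_num
      have := first_integral hgss s
      rw [h0] at this
      linarith
    have hf'0pos : 0 < deriv f 0 := by
      rw [hf'0]; exact Real.sqrt_pos.mpr (by linarith)
    have hf'posIci : ∀ s, 0 ≤ s → 0 < deriv f s := by
      by_contra hcon
      push_neg at hcon
      obtain ⟨t1, ht1, ht1'⟩ := hcon
      set S := Set.Icc 0 t1 ∩ {s : ℝ | deriv f s ≤ 0} with hS
      have hSclosed : IsClosed S :=
        isClosed_Icc.inter (isClosed_le (diff2 hgss).continuous continuous_const)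
      have hSne : S.Nonempty := ⟨t1, ⟨ht1, le_rfl⟩, ht1'⟩
      have hSbdd : BddBelow S := ⟨0, fun x hx => hx.1.1⟩
      set m := sInf S with hm
      have hmS : m ∈ S := hSclosed.csInf_mem hSne hSbdd
      have hm0 : 0 < m := by
        rcases eq_or_lt_of_le hmS.1.1 with h | h
        · exfalso
          have h2 : deriv f m ≤ 0 := hmS.2
          rw [← h] at h2
          linarith
        · exact h
      have hpre : ∀ x, 0 ≤ x → x < m → 0 < deriv f x := by
        intro x hx0 hxm
        by_contra hxn
        push_neg at hxn
        have hxS : x ∈ S := ⟨⟨hx0, hxm.le.trans hmS.1.2⟩, hxn⟩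
        exact absurd (csInf_le hSbdd hxS) (not_le.mpr hxm)
      have hf'm : deriv f m = 0 := by
        refine le_antisymm hmS.2 ?_
        have hlim : Tendsto (deriv f) (nhdsWithin m (Set.Ico 0 m)) (nhds (deriv f m)) :=
          ((diff2 hgss).continuous.tendsto m).mono_left nhdsWithin_le_nhds
        haveI : (nhdsWithin m (Set.Ico 0 m)).NeBot := by
          apply mem_closure_iff_nhdsWithin_neBot.mp
          rw [closure_Ico hm0.ne]
          exact ⟨hm0.le, le_rfl⟩
        exact ge_of_tendsto hlim
          (eventually_nhdsWithin_of_forall (fun x hx => (hpre x hx.1 hx.2).le))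
      have hfm : f m = 0 := by
        have h5 := hHn m
        rw [hf'm] at h5
        norm_num at h5
        tauto
      have hmono : StrictMonoOn f (Set.Icc 0 m) := by
        apply strictMonoOn_of_deriv_pos (convex_Icc 0 m) hcont.continuousOn
        intro x hx
        rw [interior_Icc] at hx
        exact hpre x hx.1.le hx.2
      have := hmono (Set.left_mem_Icc.mpr hm0.le) (Set.right_mem_Icc.mpr hm0.le) hm0
      rw [hf0, hfm] at this
      linarith
    have hfmono : StrictMonoOn f (Set.Ici 0) := by
      apply strictMonoOn_of_deriv_pos (convex_Ici 0) hcont.continuousOn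
      intro x hx
      rw [interior_Ici] at hx
      exact hf'posIci x hx.le
    have hfge1 : ∀ s, 0 ≤ s → 1 ≤ f s := by
      intro s hs
      rcases eq_or_lt_of_le hs with h | h
      · rw [← h, hf0]
      · have := hfmono (Set.self_mem_Ici) hs h
        rw [hf0] at this
        linarith
    have hfpos : ∀ s, 0 ≤ s → 0 < f s := fun s hs => lt_of_lt_of_le one_pos (hfge1 s hs)
    have hFgt : ∀ s, 0 ≤ s → f s < (1 - deriv f s ^ 2) ^ (-(1 : ℝ) / 2) := by
      intro s hs
      apply (pow_lt_pow_iff_left₀ (hfpos s hs).le (Real.rpow_nonneg (hupos s).le _)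
        (by omega : n ≠ 0)).mp
      rw [Fpow_eq hn (hupos s), hHn s]
      linarith
    have hblt : ∀ s, 0 ≤ s → f s * (1 - deriv f s ^ 2) ^ ((1 : ℝ) / 2) < 1 := by
      intro s hs
      have h1 := Fmul_eq (hupos s)
      have h2 : 0 < (1 - deriv f s ^ 2) ^ ((1 : ℝ) / 2) :=
        Real.rpow_pos_of_pos (hupos s) _
      nlinarith [hFgt s hs]
    have hbnn : ∀ s, 0 ≤ s → 0 ≤ f s * (1 - deriv f s ^ 2) ^ ((1 : ℝ) / 2) :=
      fun s hs => mul_nonneg (hfpos s hs).le (Real.rpow_nonneg (hupos s).le _)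
    intro t ht
    constructor
    · -- lower bound via w = √(f²-1)
      have hwcont : Continuous (fun s => Real.sqrt (f s ^ 2 - 1)) :=
        ((hcont.pow 2).sub continuous_const).sqrt
      have hwgt := grow_aux hwcont (a := 0) (fun s hs => by
        have hf1 : 1 < f s := by
          have := hfmono Set.self_mem_Ici (le_of_lt hs) hs
          rw [hf0] at this
          exact this
        have hgpos : 0 < f s ^ 2 - 1 := by nlinarith
        refine ⟨_, ?_, (((hfd hgss s).pow 2).sub_const 1).sqrt hgpos.ne'⟩
        rw [one_lt_div (by positivity)]
        have hb2 : f s ^ 2 * (1 - deriv f s ^ 2)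
            = (f s * (1 - deriv f s ^ 2) ^ ((1 : ℝ) / 2)) ^ 2 := by
          rw [mul_pow, sq_half (hupos s)]
        have hsqlt : Real.sqrt (f s ^ 2 - 1) < f s * deriv f s := by
          rw [Real.sqrt_lt' (mul_pos (by linarith) (hf'posIci s hs.le))]
          nlinarith [hblt s hs.le, hbnn s hs.le]
        norm_num
        linarith [hsqlt]) t ht
      have hw00 : Real.sqrt (f 0 ^ 2 - 1) = 0 := by rw [hf0]; norm_num
      rw [hw00] at hwgt
      have h1 : 1 < f t := by
        have := hfmono Set.self_mem_Ici ht.le ht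
        rw [hf0] at this
        exact this
      have hsq := Real.sq_sqrt (show (0 : ℝ) ≤ f t ^ 2 - 1 by nlinarith)
      rw [Real.sqrt_lt' (by linarith : 0 < f t)]
      nlinarith [hwgt, Real.sqrt_nonneg (f t ^ 2 - 1)]
    · -- upper bound via W
      have hWcont : Continuous (fun s => deriv f s * (1 - deriv f s ^ 2) ^ (-(1 : ℝ) / 2)) :=
        (diff2 hgss).continuous.mul (hucont.rpow_const (fun x => Or.inl (hupos x).ne'))
      have hWlt := slow_aux hWcont (a := 0) (fun s hs => by
        refine ⟨_, ?_, hasDeriv_W hgss s⟩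
        rw [Wval_eq hn (hupos s)]
        exact pow_lt_one₀ (hbnn s hs.le) (hblt s hs.le) (by omega)) t ht
      have hW0 : deriv f 0 * (1 - deriv f 0 ^ 2) ^ (-(1 : ℝ) / 2)
          = Real.sqrt ((2 : ℝ) ^ ((2 : ℝ) / n) - 1) := by
        rw [hu0, hf'0]
        have e1 : ((2 : ℝ) ^ (-(2 : ℝ) / n)) ^ (-(1 : ℝ) / 2) = (2 : ℝ) ^ ((1 : ℝ) / n) := by
          rw [← Real.rpow_mul (by norm_num : (0 : ℝ) ≤ 2)]
          congr 1
          field_simp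
        have e2 : (2 : ℝ) ^ ((2 : ℝ) / n) = ((2 : ℝ) ^ ((1 : ℝ) / n)) ^ (2 : ℕ) := by
          rw [← Real.rpow_natCast ((2 : ℝ) ^ ((1 : ℝ) / n)) 2,
            ← Real.rpow_mul (by norm_num : (0 : ℝ) ≤ 2)]
          congr 1
          field_simp
          norm_num
        have e3 : (2 : ℝ) ^ (-(2 : ℝ) / n) * (2 : ℝ) ^ ((2 : ℝ) / n) = 1 := by
          rw [← Real.rpow_add (by norm_num : (0 : ℝ) < 2),
            show -(2 : ℝ) / n + 2 / n = 0 by ring, Real.rpow_zero]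
        rw [e1, show (2 : ℝ) ^ ((1 : ℝ) / n)
            = Real.sqrt ((2 : ℝ) ^ ((2 : ℝ) / n)) by
          rw [e2, Real.sqrt_sq (Real.rpow_nonneg (by norm_num) _)],
          ← Real.sqrt_mul (by linarith : (0 : ℝ) ≤ 1 - (2 : ℝ) ^ (-(2 : ℝ) / n))]
        congr 1
        linear_combination -e3
      rw [hW0] at hWlt
      have hτ0 : 0 ≤ Real.sqrt ((2 : ℝ) ^ ((2 : ℝ) / n) - 1) := Real.sqrt_nonneg _
      have e1 := sq_neghalf (hupos t)
      have hFpos : 0 < (1 - deriv f t ^ 2) ^ (-(1 : ℝ) / 2) :=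
        Real.rpow_pos_of_pos (hupos t) _
      have hWnn : 0 ≤ deriv f t * (1 - deriv f t ^ 2) ^ (-(1 : ℝ) / 2) :=
        mul_nonneg (hf'posIci t ht.le).le hFpos.le
      have hW2 : (deriv f t * (1 - deriv f t ^ 2) ^ (-(1 : ℝ) / 2)) ^ 2
          = ((1 - deriv f t ^ 2) ^ (-(1 : ℝ) / 2)) ^ 2 - 1 := by
        linear_combination -e1
      have hFf := hFgt t ht.le
      rw [Real.lt_sqrt (hfpos t ht.le).le]
      nlinarith [hWlt, hWnn, hW2, hFf, hfpos t ht.le, hFpos, hτ0, ht]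
  · -- branch 0 < c < 1
    intro hc0 hc1
    obtain ⟨hf0, hf'0⟩ := hic hc1
    have h1c : (0 : ℝ) < 1 - c := by linarith
    have hHn : ∀ s, (1 - deriv f s ^ 2) ^ (-(n : ℝ) / 2) = f s ^ n + c := by
      intro s
      have hf0n : f 0 ^ n = 1 - c := by
        rw [hf0, ← Real.rpow_natCast ((1 - c) ^ ((1 : ℝ) / n)) n, ← Real.rpow_mul h1c.le,
          show (1 : ℝ) / n * n = 1 by field_simp, Real.rpow_one]
      have h0 : (1 - deriv f 0 ^ 2) ^ (-(n : ℝ) / 2) - f 0 ^ n = c := by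
        rw [hf'0, hf0n]
        norm_num
      have := first_integral hgss s
      rw [h0] at this
      linarith
    have hfn_lb : ∀ s, 1 - c ≤ f s ^ n := by
      intro s
      have h1 := hHn s
      have h2 := G_ge_one hgss s
      linarith
    have hfpos : ∀ s, 0 < f s := by
      intro s
      by_contra hle
      push_neg at hle
      have hf0pos : 0 < f 0 := by rw [hf0]; exact Real.rpow_pos_of_pos h1c _
      obtain ⟨x, _, hfx⟩ := intermediate_value_uIcc (a := s) (b := 0)
        hcont.continuousOn (Set.mem_uIcc.mpr (Or.inl ⟨hle, hf0pos.le⟩))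
      have := hfn_lb x
      rw [hfx, zero_pow (by omega : n ≠ 0)] at this
      linarith
    have hf''pos : ∀ x, 0 < deriv (deriv f) x := by
      intro x
      rw [(hgss.2 x).2]
      exact mul_pos (pow_pos (hfpos x) _) (Real.rpow_pos_of_pos (hupos x) _)
    have hf'mono : StrictMono (deriv f) := strictMono_of_deriv_pos hf''pos
    have hf'pos : ∀ s, 0 < s → 0 < deriv f s := by
      intro s hs
      have := hf'mono hs
      rwa [hf'0] at this
    have hf'nonneg : ∀ s, 0 ≤ s → 0 ≤ deriv f s := by
      intro s hs
      rcases eq_or_lt_of_le hs with h | h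
      · rw [← h, hf'0]
      · exact (hf'pos s h).le
    have hfmono : StrictMonoOn f (Set.Ici 0) := by
      apply strictMonoOn_of_deriv_pos (convex_Ici 0) hcont.continuousOn
      intro x hx
      rw [interior_Ici] at hx
      exact hf'pos x hx
    have hFgt : ∀ s, f s < (1 - deriv f s ^ 2) ^ (-(1 : ℝ) / 2) := by
      intro s
      apply (pow_lt_pow_iff_left₀ (hfpos s).le (Real.rpow_nonneg (hupos s).le _)
        (by omega : n ≠ 0)).mp
      rw [Fpow_eq hn (hupos s), hHn s]
      linarith
    have hblt : ∀ s, f s * (1 - deriv f s ^ 2) ^ ((1 : ℝ) / 2) < 1 := by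
      intro s
      have h1 := Fmul_eq (hupos s)
      have h2 : 0 < (1 - deriv f s ^ 2) ^ ((1 : ℝ) / 2) :=
        Real.rpow_pos_of_pos (hupos s) _
      nlinarith [hFgt s]
    have hbnn : ∀ s, 0 ≤ f s * (1 - deriv f s ^ 2) ^ ((1 : ℝ) / 2) :=
      fun s => mul_nonneg (hfpos s).le (Real.rpow_nonneg (hupos s).le _)
    have hf0lt1 : f 0 < 1 := by
      rw [hf0]
      exact Real.rpow_lt_one h1c.le (by linarith) (div_pos one_pos hn0)
    constructor
    · -- existence and uniqueness of τ
      have ha : 0 < deriv f 1 := hf'pos 1 one_pos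
      obtain ⟨T, hT⟩ : ∃ T : ℝ, T = 1 + 1 / deriv f 1 := ⟨_, rfl⟩
      have h1T : (1 : ℝ) < T := by
        have := one_div_pos.mpr ha
        rw [hT]
        linarith
      have hfT : 1 < f T := by
        obtain ⟨ξ, hξ, hslope⟩ := exists_hasDerivAt_eq_slope f (deriv f) h1T
          hcont.continuousOn (fun x _ => hfd hgss x)
        have hgt : deriv f 1 < deriv f ξ := hf'mono hξ.1
        rw [eq_div_iff (by linarith : T - 1 ≠ 0)] at hslope
        have hT1 : T - 1 = 1 / deriv f 1 := by rw [hT]; ring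
        have hf1pos : 0 < f 1 := hfpos 1
        have : 1 < deriv f ξ * (T - 1) := by
          rw [hT1]
          calc (1 : ℝ) = deriv f 1 * (1 / deriv f 1) := by field_simp
          _ < deriv f ξ * (1 / deriv f 1) :=
            mul_lt_mul_of_pos_right hgt (one_div_pos.mpr ha)
        nlinarith [hslope]
      obtain ⟨τ, hτmem, hfτ⟩ := intermediate_value_Icc
        (by linarith : (0 : ℝ) ≤ T) hcont.continuousOn ⟨hf0lt1.le, hfT.le⟩
      have hτpos : 0 < τ := by
        rcases eq_or_lt_of_le hτmem.1 with h | h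
        · exfalso
          rw [← h] at hfτ
          rw [hfτ] at hf0lt1
          exact lt_irrefl _ hf0lt1
        · exact h
      refine ⟨τ, ⟨hτpos, hfτ⟩, ?_⟩
      intro y hy
      exact hfmono.injOn hy.1.le hτpos.le (hy.2.trans hfτ.symm)
    · intro τ hτpos hfτ t ht
      constructor
      · -- f t < √(1+t²) via W
        have hWcont : Continuous
            (fun s => deriv f s * (1 - deriv f s ^ 2) ^ (-(1 : ℝ) / 2)) :=
          (diff2 hgss).continuous.mul (hucont.rpow_const (fun x => Or.inl (hupos x).ne'))
        have hWlt := slow_aux hWcont (a := 0) (fun s hs => by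
          refine ⟨_, ?_, hasDeriv_W hgss s⟩
          rw [Wval_eq hn (hupos s)]
          exact pow_lt_one₀ (hbnn s) (hblt s) (by omega)) t ht
        rw [hf'0] at hWlt
        simp only [zero_mul, zero_add, sub_zero] at hWlt
        have e1 := sq_neghalf (hupos t)
        have hFpos : 0 < (1 - deriv f t ^ 2) ^ (-(1 : ℝ) / 2) :=
          Real.rpow_pos_of_pos (hupos t) _
        have hWnn : 0 ≤ deriv f t * (1 - deriv f t ^ 2) ^ (-(1 : ℝ) / 2) :=
          mul_nonneg (hf'nonneg t ht.le) hFpos.le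
        have hW2 : (deriv f t * (1 - deriv f t ^ 2) ^ (-(1 : ℝ) / 2)) ^ 2
            = ((1 - deriv f t ^ 2) ^ (-(1 : ℝ) / 2)) ^ 2 - 1 := by
          linear_combination -e1
        have hFf := hFgt t
        rw [Real.lt_sqrt (hfpos t).le]
        nlinarith [hWlt, hWnn, hW2, hFf, hfpos t, hFpos, ht]
      · -- √(1+t²) < f (t+τ) via w from a = τ
        have hwcont : Continuous (fun s => Real.sqrt (f s ^ 2 - 1)) :=
          ((hcont.pow 2).sub continuous_const).sqrt
        have hwgt := grow_aux hwcont (a := τ) (fun s hs => by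
          have hf1 : 1 < f s := by
            have := hfmono (Set.mem_Ici.mpr hτpos.le)
              (Set.mem_Ici.mpr (hτpos.trans hs).le) hs
            rwa [hfτ] at this
          have hgpos : 0 < f s ^ 2 - 1 := by nlinarith
          refine ⟨_, ?_, (((hfd hgss s).pow 2).sub_const 1).sqrt hgpos.ne'⟩
          rw [one_lt_div (by positivity)]
          have hb2 : f s ^ 2 * (1 - deriv f s ^ 2)
              = (f s * (1 - deriv f s ^ 2) ^ ((1 : ℝ) / 2)) ^ 2 := by
            rw [mul_pow, sq_half (hupos s)]
          have hsqlt : Real.sqrt (f s ^ 2 - 1) < f s * deriv f s := by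
            rw [Real.sqrt_lt' (mul_pos (by linarith) (hf'pos s (hτpos.trans hs)))]
            nlinarith [hblt s, hbnn s]
          norm_num
          linarith [hsqlt]) (t + τ) (by linarith)
        have hwτ : Real.sqrt (f τ ^ 2 - 1) = 0 := by rw [hfτ]; norm_num
        rw [hwτ] at hwgt
        have hf1 : 1 < f (t + τ) := by
          have := hfmono (Set.mem_Ici.mpr hτpos.le)
            (Set.mem_Ici.mpr (by linarith : (0:ℝ) ≤ t + τ)) (by linarith)
          rwa [hfτ] at this
        have hsq := Real.sq_sqrt (show (0 : ℝ) ≤ f (t + τ) ^ 2 - 1 by nlinarith)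
        rw [Real.sqrt_lt' (by linarith : 0 < f (t + τ))]
        nlinarith [hwgt, Real.sqrt_nonneg (f (t + τ) ^ 2 - 1)]
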